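/- Consider the complete k-ary tree T with ℓ levels of nodes and m = |nodes(T)| total nodes. Let x : leaves(T) → ℝ be leaf counts, H(x)[v] = Σ_{u ∈ leaves(v)} x[u], and h̃ = H(x) + η, where the coordinates of η are independent with mean zero and common variance σ² > 0. Let h̄ be the minimum L2 consistent solution for h̃, and for a range query q given by a set R of leaves with true answer q(x) = Σ_{u ∈ R} x[u], let h̄_q = Σ_{u ∈ R} h̄[u]. Then for every vector a ∈ ℝ^m such that the linear estimator a·h̃ is unbiased for q (i.e., Σ_v a[v]·H(x)[v] = q(x) for all x ∈ ℝ^{leaves}), the mean squared error satisfies E[(h̄_q − q(x))²] ≤ E[(a·h̃ − q(x))²]. That is, h̄_q has minimum error among all linear unbiased estimators of the range query q. -/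

import Mathlib

open MeasureTheory

/-- A node of the complete `k`-ary tree with `ℓ` levels of nodes. -/
abbrev TreeNode (k ℓ : ℕ) : Type := Σ d : Fin ℓ, Fin (k ^ (d : ℕ))

/-- The node at depth `d` with index `j`. -/
def mkNode {k ℓ : ℕ} (d : ℕ) (hd : d < ℓ) (j : Fin (k ^ d)) : TreeNode k ℓ := ⟨⟨d, hd⟩, j⟩

/-- The `r`-th child of the node at depth `d` with index `j`. -/
def childNode {k ℓ : ℕ} (d : ℕ) (hd : d + 1 < ℓ) (j : Fin (k ^ d)) (r : Fin k) :
    TreeNode k ℓ :=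
  ⟨⟨d + 1, hd⟩, ⟨(j : ℕ) * k + (r : ℕ), by
    have hj := j.isLt
    have hr := r.isLt
    calc (j : ℕ) * k + (r : ℕ) < ((j : ℕ) + 1) * k := by nlinarith
      _ ≤ k ^ d * k := Nat.mul_le_mul_right _ (by omega)
      _ = k ^ (d + 1) := (pow_succ k d).symm⟩⟩

/-- A node-value vector is consistent if every internal node's value equals the sum of
its children's values. -/
def Consistent {k ℓ : ℕ} (t : TreeNode k ℓ → ℝ) : Prop :=
  ∀ (d : ℕ) (hd : d + 1 < ℓ) (j : Fin (k ^ d)),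
    t (mkNode d (by omega) j) = ∑ r : Fin k, t (childNode d hd j r)

/-- The leaves of the subtree rooted at `v`. -/
def subtreeLeaves {k ℓ : ℕ} (v : TreeNode k ℓ) : Finset (Fin (k ^ (ℓ - 1))) :=
  Finset.univ.filter fun u => (u : ℕ) / k ^ (ℓ - 1 - (v.1 : ℕ)) = (v.2 : ℕ)

/-- The consistent node counts induced by leaf counts `x`: `H(x)[v] = Σ_{u ∈ leaves(v)} x[u]`. -/
noncomputable def Hfun {k ℓ : ℕ} (x : Fin (k ^ (ℓ - 1)) → ℝ) (v : TreeNode k ℓ) : ℝ :=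
  ∑ u ∈ subtreeLeaves v, x u

/-!
Consistent vectors form a subspace `S`, and `hbar` is a least-squares projection `P` onto it,
so `P g - g ⊥ S` for every `g`; in particular `P` is self-adjoint. With `c` the indicator of the
leaves in `R`, the constrained answer is `c ⬝ᵥ P h̃ = P c ⬝ᵥ h̃`, a linear unbiased estimator with
coefficients `P c` and error `P c ⬝ᵥ η`. An unbiased `a` agrees with `c`, hence with `P c`, on
`S ∋ P c`, so `a - P c ⊥ P c` and `‖P c‖ ≤ ‖a‖`. Independence turns the mean squared error of a
coefficient vector `w` into `‖w‖² σ²`.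
-/

open ProbabilityTheory Finset

section LeastSquares

variable {ι : Type*} [Fintype ι]

structure IsLeastSquaresProj (S : Submodule ℝ (ι → ℝ)) (P : (ι → ℝ) → ι → ℝ) : Prop where
  mem : ∀ g, P g ∈ S
  le : ∀ g, ∀ t ∈ S, (P g - g) ⬝ᵥ (P g - g) ≤ (t - g) ⬝ᵥ (t - g)

variable {S : Submodule ℝ (ι → ℝ)} {P : (ι → ℝ) → ι → ℝ}

namespace IsLeastSquaresProj

theorem sub_dotProduct_eq_zero (hP : IsLeastSquaresProj S P) (g : ι → ℝ) {s : ι → ℝ}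
    (hs : s ∈ S) : (P g - g) ⬝ᵥ s = 0 := by
  set r := P g - g
  have hquad : ∀ τ : ℝ, 0 ≤ (s ⬝ᵥ s) * (τ * τ) + 2 * (r ⬝ᵥ s) * τ + 0 := by
    intro τ
    have h := hP.le g (P g + τ • s) (S.add_mem (hP.mem g) (S.smul_mem τ hs))
    have hexp : (P g + τ • s - g) = r + τ • s := by simp only [r]; abel
    rw [hexp] at h
    simp only [add_dotProduct, dotProduct_add, smul_dotProduct, dotProduct_smul, smul_eq_mul,
      dotProduct_comm s r] at h
    linarith
  have hdisc := discrim_le_zero hquad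
  rw [discrim] at hdisc
  nlinarith [sq_nonneg (r ⬝ᵥ s)]

theorem dotProduct_apply_comm (hP : IsLeastSquaresProj S P) (c g : ι → ℝ) :
    c ⬝ᵥ P g = P c ⬝ᵥ g := by
  have hc := hP.sub_dotProduct_eq_zero c (hP.mem g)
  have hg := hP.sub_dotProduct_eq_zero g (hP.mem c)
  rw [sub_dotProduct, sub_eq_zero] at hc hg
  rw [← hc, dotProduct_comm, hg, dotProduct_comm]

theorem apply_dotProduct_self_le (hP : IsLeastSquaresProj S P) {a c : ι → ℝ}
    (hac : ∀ s ∈ S, a ⬝ᵥ s = c ⬝ᵥ s) : P c ⬝ᵥ P c ≤ a ⬝ᵥ a := by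
  have horth : (a - P c) ⬝ᵥ P c = 0 := by
    have h := hP.sub_dotProduct_eq_zero c (hP.mem c)
    rw [sub_dotProduct] at h ⊢
    rw [hac _ (hP.mem c)]
    linarith
  have hsplit : a ⬝ᵥ a = P c ⬝ᵥ P c + 2 * ((a - P c) ⬝ᵥ P c) + (a - P c) ⬝ᵥ (a - P c) := by
    simp only [sub_dotProduct, dotProduct_sub, dotProduct_comm (P c) a]
    ring
  have hnonneg : 0 ≤ (a - P c) ⬝ᵥ (a - P c) := sum_nonneg fun i _ => mul_self_nonneg _
  rw [hsplit, horth]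
  linarith

end IsLeastSquaresProj

end LeastSquares

section GaussMarkov

variable {ι Ω : Type*} [Fintype ι] [MeasurableSpace Ω] {μ : Measure Ω} [IsProbabilityMeasure μ]
  {η : Ω → ι → ℝ} {σ : ℝ}

theorem integral_dotProduct_sq (hσ : σ ≠ 0) (hmeas : ∀ i, Measurable fun ω => η ω i)
    (hindep : iIndepFun (fun i ω => η ω i) μ) (hmean : ∀ i, ∫ ω, η ω i ∂μ = 0)
    (hvar : ∀ i, variance (fun ω => η ω i) μ = σ ^ 2) (w : ι → ℝ) :
    ∫ ω, (w ⬝ᵥ η ω) ^ 2 ∂μ = (w ⬝ᵥ w) * σ ^ 2 := by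
  have hL2 : ∀ i, MemLp (fun ω => η ω i) 2 μ := fun i =>
    memLp_two_of_variance_ne_zero (hmeas i).aestronglyMeasurable (by simp [hvar i, hσ])
  set X : ι → Ω → ℝ := fun i ω => w i * η ω i
  have hX : (fun ω => w ⬝ᵥ η ω) = ∑ i, X i := by
    ext ω
    simp [X, dotProduct]
  have hXmean : μ[∑ i, X i] = 0 := by
    rw [← hX]
    simp only [dotProduct]
    rw [integral_finsetSum _ fun i _ => ((hL2 i).integrable one_le_two).const_mul (w i)]
    simp [integral_const_mul, hmean]
  have hXindep : Set.Pairwise ↑(univ : Finset ι) fun i j => X i ⟂ᵢ[μ] X j :=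
    fun i _ j _ hij =>
      (hindep.indepFun hij).comp (measurable_const_mul (w i)) (measurable_const_mul (w j))
  calc ∫ ω, (w ⬝ᵥ η ω) ^ 2 ∂μ = variance (∑ i, X i) μ := by
        rw [variance_of_integral_eq_zero (by rw [← hX]; fun_prop) hXmean]
        simp only [← hX]
    _ = ∑ i, variance (X i) μ :=
        IndepFun.variance_sum (fun i _ => (hL2 i).const_mul (w i)) hXindep
    _ = (w ⬝ᵥ w) * σ ^ 2 := by
        simp [X, variance_const_mul, hvar, dotProduct, sum_mul, sq]

theorem IsLeastSquaresProj.integral_sq_error_le {S : Submodule ℝ (ι → ℝ)}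
    {P : (ι → ℝ) → ι → ℝ} (hP : IsLeastSquaresProj S P) {m a c : ι → ℝ} (hm : m ∈ S)
    (hac : ∀ s ∈ S, a ⬝ᵥ s = c ⬝ᵥ s) (hσ : σ ≠ 0)
    (hmeas : ∀ i, Measurable fun ω => η ω i) (hindep : iIndepFun (fun i ω => η ω i) μ)
    (hmean : ∀ i, ∫ ω, η ω i ∂μ = 0) (hvar : ∀ i, variance (fun ω => η ω i) μ = σ ^ 2) :
    ∫ ω, (c ⬝ᵥ P (m + η ω) - c ⬝ᵥ m) ^ 2 ∂μ ≤ ∫ ω, (a ⬝ᵥ (m + η ω) - c ⬝ᵥ m) ^ 2 ∂μ := by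
  have hPc : P c ⬝ᵥ m = c ⬝ᵥ m := by
    rw [← sub_eq_zero, ← sub_dotProduct]
    exact hP.sub_dotProduct_eq_zero c hm
  have hleft : ∀ ω, c ⬝ᵥ P (m + η ω) - c ⬝ᵥ m = P c ⬝ᵥ η ω := fun ω => by
    rw [hP.dotProduct_apply_comm, dotProduct_add, hPc, add_sub_cancel_left]
  have hright : ∀ ω, a ⬝ᵥ (m + η ω) - c ⬝ᵥ m = a ⬝ᵥ η ω := fun ω => by
    rw [dotProduct_add, hac m hm, add_sub_cancel_left]
  simp only [hleft, hright, integral_dotProduct_sq hσ hmeas hindep hmean hvar]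
  gcongr
  exact hP.apply_dotProduct_self_le hac

end GaussMarkov

section Tree

variable {k ℓ : ℕ}

def consistentSubspace (k ℓ : ℕ) : Submodule ℝ (TreeNode k ℓ → ℝ) where
  carrier := {t | Consistent t}
  add_mem' {s t} hs ht d hd j := by
    simp only [Pi.add_apply, hs d hd j, ht d hd j, sum_add_distrib]
  zero_mem' d hd j := by simp
  smul_mem' c t ht d hd j := by simp only [Pi.smul_apply, smul_eq_mul, ht d hd j, mul_sum]

theorem Hfun_mkNode_leaf (h : ℓ - 1 < ℓ) (y : Fin (k ^ (ℓ - 1)) → ℝ) (u : Fin (k ^ (ℓ - 1))) :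
    Hfun y (mkNode (ℓ - 1) h u) = y u := by
  have hleaves : subtreeLeaves (mkNode (ℓ - 1) h u) = {u} := by
    ext w
    simp [subtreeLeaves, mkNode, Fin.val_eq_val]
  rw [Hfun, hleaves, sum_singleton]

theorem Nat.div_eq_iff_exists_lt {m j k : ℕ} (hk : 0 < k) :
    m / k = j ↔ ∃ r < k, m = j * k + r := by
  rw [Nat.div_eq_iff hk]
  constructor
  · rintro ⟨h1, h2⟩
    exact ⟨m - j * k, by omega, by omega⟩
  · rintro ⟨r, hr, rfl⟩
    omega

theorem subtreeLeaves_mkNode_eq_biUnion (hk : 0 < k) (d : ℕ) (hd : d + 1 < ℓ)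
    (j : Fin (k ^ d)) :
    subtreeLeaves (mkNode d (by omega) j)
      = univ.biUnion fun r : Fin k => subtreeLeaves (childNode d hd j r) := by
  ext u
  have he : ℓ - 1 - d = (ℓ - 1 - (d + 1)) + 1 := by omega
  simp only [subtreeLeaves, mem_biUnion, mem_filter, mem_univ, true_and]
  simp only [mkNode, childNode]
  rw [he, pow_succ, ← Nat.div_div_eq_div_mul, Nat.div_eq_iff_exists_lt hk]
  exact ⟨fun ⟨r, hr, h⟩ => ⟨⟨r, hr⟩, h⟩, fun ⟨r, h⟩ => ⟨r, r.isLt, h⟩⟩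

theorem consistent_Hfun (hk : 0 < k) (y : Fin (k ^ (ℓ - 1)) → ℝ) :
    Consistent (Hfun (k := k) (ℓ := ℓ) y) := by
  intro d hd j
  have hdisj : Set.PairwiseDisjoint (univ : Finset (Fin k))
      fun r => subtreeLeaves (childNode (ℓ := ℓ) d hd j r) := by
    intro r₁ _ r₂ _ hne
    refine disjoint_left.2 fun u hu₁ hu₂ => hne (Fin.ext ?_)
    simp only [subtreeLeaves, mem_filter, mem_univ, true_and] at hu₁ hu₂
    simp only [childNode] at hu₁ hu₂
    omega
  rw [Hfun, subtreeLeaves_mkNode_eq_biUnion hk d hd j, sum_biUnion hdisj]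
  rfl

theorem Consistent.eq_Hfun (hk : 0 < k) {t : TreeNode k ℓ → ℝ} (ht : Consistent t)
    (h : ℓ - 1 < ℓ) : t = Hfun (fun u => t (mkNode (ℓ - 1) h u)) := by
  set y := fun u => t (mkNode (ℓ - 1) h u)
  have hheight : ∀ n d (hd : d < ℓ) (j : Fin (k ^ d)), ℓ - 1 - d = n →
      t (mkNode d hd j) = Hfun y (mkNode d hd j) := by
    intro n
    induction n with
    | zero =>
      intro d hd j hn
      obtain rfl : d = ℓ - 1 := by omega
      exact (Hfun_mkNode_leaf hd y j).symm
    | succ n ih =>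
      intro d hd j hn
      have hd' : d + 1 < ℓ := by omega
      rw [ht d hd' j, consistent_Hfun hk y d hd' j]
      exact sum_congr rfl fun r _ => ih _ hd' _ (by omega)
  funext ⟨⟨d, hd⟩, j⟩
  exact hheight _ d hd j rfl

end Tree

/-- **Gauss–Markov optimality of constrained inference for range queries.**
Let `h̃ = H(x) + η` where the coordinates of `η` are independent with mean zero and common
variance `σ² > 0`, let `hbar` send each node-value vector to its minimum `L₂` consistent
solution, and let `h̄_q = Σ_{u ∈ R} h̄[u]` answer the range query `q` given by the set of
leaves `R`.  Then for every linear estimator `a·h̃` that is unbiased for `q` (i.e.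
`Σ_v a[v]·H(y)[v] = Σ_{u ∈ R} y[u]` for all `y`),
`E[(h̄_q − q(x))²] ≤ E[(a·h̃ − q(x))²]`. -/
theorem tree_inference_gauss_markov_optimal (k ℓ : ℕ) (hk : 2 ≤ k) (hℓ : 1 ≤ ℓ)
    (σ : ℝ) (hσ : 0 < σ)
    {W : Type*} [MeasurableSpace W] (μ : Measure W) [IsProbabilityMeasure μ]
    (η : W → TreeNode k ℓ → ℝ)
    (hmeas : ∀ v, Measurable fun ω => η ω v)
    (hindep : ProbabilityTheory.iIndepFun (fun v ω => η ω v) μ)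
    (hmean : ∀ v, (∫ ω, η ω v ∂μ) = 0)
    (hvar : ∀ v, ProbabilityTheory.variance (fun ω => η ω v) μ = σ ^ 2)
    (x : Fin (k ^ (ℓ - 1)) → ℝ) (R : Finset (Fin (k ^ (ℓ - 1))))
    (hbar : (TreeNode k ℓ → ℝ) → TreeNode k ℓ → ℝ)
    (hbar_cons : ∀ g, Consistent (hbar g))
    (hbar_min : ∀ g t, Consistent t → ∑ v, (hbar g v - g v) ^ 2 ≤ ∑ v, (t v - g v) ^ 2)
    (a : TreeNode k ℓ → ℝ)
    (hunbiased : ∀ y : Fin (k ^ (ℓ - 1)) → ℝ, ∑ v, a v * Hfun y v = ∑ u ∈ R, y u) :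
    (∫ ω, ((∑ u ∈ R, hbar (fun w => Hfun x w + η ω w) (mkNode (ℓ - 1) (by omega) u))
          - ∑ u ∈ R, x u) ^ 2 ∂μ)
      ≤ ∫ ω, ((∑ v, a v * (Hfun x v + η ω v)) - ∑ u ∈ R, x u) ^ 2 ∂μ := by
  have hk₀ : 0 < k := by omega
  have hleaf : ℓ - 1 < ℓ := by omega
  set c : TreeNode k ℓ → ℝ := ∑ u ∈ R, Pi.single (mkNode (ℓ - 1) hleaf u) 1
  have hc : ∀ t, c ⬝ᵥ t = ∑ u ∈ R, t (mkNode (ℓ - 1) hleaf u) := fun t => by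
    simp [c, sum_dotProduct]
  have hcH : ∀ y, c ⬝ᵥ Hfun y = ∑ u ∈ R, y u := fun y => by
    simp only [hc, Hfun_mkNode_leaf]
  have hP : IsLeastSquaresProj (consistentSubspace k ℓ) hbar :=
    ⟨hbar_cons, fun g t ht => by simpa only [dotProduct, Pi.sub_apply, sq] using hbar_min g t ht⟩
  have hac : ∀ s ∈ consistentSubspace k ℓ, a ⬝ᵥ s = c ⬝ᵥ s := fun s hs => by
    rw [Consistent.eq_Hfun hk₀ hs hleaf, hcH]
    exact hunbiased _
  have key := hP.integral_sq_error_le (consistent_Hfun hk₀ x) hac hσ.ne' hmeas hindep hmean hvar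
  simp only [hc, Hfun_mkNode_leaf] at key
  exact key
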